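/- arXiv:1809.10510 — 6 statements merged into one kernel-verified Lean document; each statement's English description precedes it below -/
import Mathlib

section
/- For every open set Ω ⊂ ℝⁿ⁺¹, the essential boundary ∂ₑΩ = ∂Ω ∖ ∂ₛΩ is a closed subset of ℝⁿ⁺¹. -/
/-!
If `p ∈ ∂ₛΩ`, then for some `ε > 0` the lower half cube `Q_ε⁻(p)` lies in `Ω` and the upper one
`Q_ε⁺(p)` misses `Ω`, hence misses `closure Ω`. So every boundary point in `Q_{ε/2}(p)` lies on the
time slice of `p`, and its half cubes of radius `ε/2` sit inside those of `p`: it is singular too.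
Thus `∂ₛΩ` is relatively open in the closed set `∂Ω`, and `∂ₑΩ = ∂Ω ∖ ∂ₛΩ` is closed.
-/

open MeasureTheory Set Filter Topology

noncomputable section

/-- Points of space-time `ℝⁿ × ℝ`. -/
abbrev Pt (n : ℕ) : Type := EuclideanSpace ℝ (Fin n) × ℝ

/-- The open parabolic cube `Q_r(c)`. -/
def pcube (n : ℕ) (c : Pt n) (r : ℝ) : Set (Pt n) :=
  {p | (∀ i, |p.1 i - c.1 i| < r) ∧ c.2 - r ^ 2 < p.2 ∧ p.2 < c.2 + r ^ 2}

/-- The time-backward half cube `Q_r⁻(c)`. -/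
def pcubeMinus (n : ℕ) (c : Pt n) (r : ℝ) : Set (Pt n) :=
  {p | (∀ i, |p.1 i - c.1 i| < r) ∧ c.2 - r ^ 2 < p.2 ∧ p.2 < c.2}

/-- The time-forward half cube `Q_r⁺(c)`. -/
def pcubePlus (n : ℕ) (c : Pt n) (r : ℝ) : Set (Pt n) :=
  {p | (∀ i, |p.1 i - c.1 i| < r) ∧ c.2 < p.2 ∧ p.2 < c.2 + r ^ 2}

/-- The parabolic norm `‖(X,t)‖ = |X| + |t|^{1/2}`. -/
def pnorm (n : ℕ) (p : Pt n) : ℝ := ‖p.1‖ + Real.sqrt |p.2|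

/-- The parabolic distance. -/
def pdist (n : ℕ) (p q : Pt n) : ℝ := pnorm n (p.1 - q.1, p.2 - q.2)

/-- The parabolic diameter of a set (in `ℝ≥0∞`). -/
def pdiam (n : ℕ) (A : Set (Pt n)) : ENNReal :=
  ⨆ p ∈ A, ⨆ q ∈ A, ENNReal.ofReal (pdist n p q)

/-- The parabolic distance from a point to a set. -/
def pdistTo (n : ℕ) (p : Pt n) (A : Set (Pt n)) : ℝ := sInf ((pdist n p) '' A)

/-- The parabolic boundary `𝒫Ω`. -/
def parabolicBdry (n : ℕ) (Ω : Set (Pt n)) : Set (Pt n) :=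
  {p | p ∈ frontier Ω ∧ ∀ r > 0, (pcubeMinus n p r ∩ Ωᶜ).Nonempty}

/-- The bottom boundary `ℬΩ`. -/
def bottomBdry (n : ℕ) (Ω : Set (Pt n)) : Set (Pt n) :=
  {p | p ∈ parabolicBdry n Ω ∧ ∃ ε > 0, pcubePlus n p ε ⊆ Ω}

/-- The abnormal boundary `∂ₐΩ`. -/
def abnormalBdry (n : ℕ) (Ω : Set (Pt n)) : Set (Pt n) :=
  {p | p ∈ frontier Ω ∧ ∃ ε > 0, pcubeMinus n p ε ⊆ Ω}

/-- The singular boundary `∂ₛΩ`. -/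
def singBdry (n : ℕ) (Ω : Set (Pt n)) : Set (Pt n) :=
  {p | p ∈ abnormalBdry n Ω ∧ ∃ ε > 0, pcubePlus n p ε ∩ Ω = ∅}

/-- The essential boundary `∂ₑΩ = ∂Ω ∖ ∂ₛΩ`. -/
def essBdry (n : ℕ) (Ω : Set (Pt n)) : Set (Pt n) := frontier Ω \ singBdry n Ω

/-- `T_min(Ω)`, as an extended real number. -/
def parTmin (n : ℕ) (Ω : Set (Pt n)) : EReal := ⨅ p ∈ Ω, (p.2 : EReal)

/-- `T_max(Ω)`, as an extended real number. -/
def parTmax (n : ℕ) (Ω : Set (Pt n)) : EReal := ⨆ p ∈ Ω, (p.2 : EReal)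

/-- The quasi-lateral boundary `Σ`:  `∂Ω` with the time slice of `ℬΩ` at `t = T_min(Ω)`
removed (when `T_min(Ω) > -∞`), and the time slice of `∂ₛΩ` at `t = T_max(Ω)` removed
(when `T_max(Ω) < ∞`).  Since no real time coordinate can equal `±∞`, the `EReal`
formulation below encodes exactly this. -/
def quasiLateral (n : ℕ) (Ω : Set (Pt n)) : Set (Pt n) :=
  frontier Ω \
    ({p | p ∈ bottomBdry n Ω ∧ (p.2 : EReal) = parTmin n Ω} ∪
     {p | p ∈ singBdry n Ω ∧ (p.2 : EReal) = parTmax n Ω})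

/-- The free-space heat kernel. -/
def heatKernel (n : ℕ) (X : EuclideanSpace ℝ (Fin n)) (t : ℝ)
    (y : EuclideanSpace ℝ (Fin n)) (s : ℝ) : ℝ :=
  if s < t then
    (4 * Real.pi * (t - s)) ^ (-(n : ℝ) / 2) * Real.exp (-‖X - y‖ ^ 2 / (4 * (t - s)))
  else 0

/-- Time derivative `∂ₜ u`. -/
def timeDeriv (n : ℕ) (u : Pt n → ℝ) (p : Pt n) : ℝ := deriv (fun τ => u (p.1, τ)) p.2

/-- Spatial Laplacian `Δ_X u`. -/
def spaceLaplacian (n : ℕ) (u : Pt n → ℝ) (p : Pt n) : ℝ :=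
  ∑ i : Fin n,
    iteratedDeriv 2 (fun h : ℝ => u (p.1 + h • EuclideanSpace.single i (1 : ℝ), p.2)) 0

/-- A classical supersolution of the heat equation on `U`: continuous on `U`,
twice continuously differentiable in `X` and once in `t`, with `∂ₜ u - Δ_X u ≥ 0`. -/
structure IsSupersolutionOn (n : ℕ) (u : Pt n → ℝ) (U : Set (Pt n)) : Prop where
  cont : ContinuousOn u U
  smoothX : ∀ p ∈ U, ContDiffAt ℝ 2 (fun X => u (X, p.2)) p.1
  smoothT : ∀ p ∈ U, ContDiffAt ℝ 1 (fun τ => u (p.1, τ)) p.2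
  ineq : ∀ p ∈ U, spaceLaplacian n u p ≤ timeDeriv n u p

/-- A classical subsolution of the heat equation on `U`. -/
structure IsSubsolutionOn (n : ℕ) (u : Pt n → ℝ) (U : Set (Pt n)) : Prop where
  cont : ContinuousOn u U
  smoothX : ∀ p ∈ U, ContDiffAt ℝ 2 (fun X => u (X, p.2)) p.1
  smoothT : ∀ p ∈ U, ContDiffAt ℝ 1 (fun τ => u (p.1, τ)) p.2
  ineq : ∀ p ∈ U, timeDeriv n u p ≤ spaceLaplacian n u p

/-- A caloric function (classical solution of the heat equation) on `U`. -/
structure IsCaloricOn (n : ℕ) (u : Pt n → ℝ) (U : Set (Pt n)) : Prop where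
  cont : ContinuousOn u U
  smoothX : ∀ p ∈ U, ContDiffAt ℝ 2 (fun X => u (X, p.2)) p.1
  smoothT : ∀ p ∈ U, ContDiffAt ℝ 1 (fun τ => u (p.1, τ)) p.2
  eq : ∀ p ∈ U, timeDeriv n u p = spaceLaplacian n u p

theorem IsClosed.sdiff_of_forall_mem_nhdsWithin {X : Type*} [TopologicalSpace X] {s t : Set X}
    (hs : IsClosed s) (ht : ∀ x ∈ t, t ∈ 𝓝[s] x) : IsClosed (s \ t) := by
  rw [← isOpen_compl_iff, isOpen_iff_mem_nhds]
  intro x hx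
  by_cases hxs : x ∈ s
  · have hxt : x ∈ t := by_contra fun h => hx ⟨hxs, h⟩
    filter_upwards [mem_nhdsWithin_iff_eventually.mp (ht x hxt)] with y hy hyst
    exact hyst.2 (hy hyst.1)
  · filter_upwards [hs.isOpen_compl.mem_nhds hxs] with y hy hyst
    exact hy hyst.1

section ParabolicCubes

variable {n : ℕ}

theorem isOpen_setOf_forall_abs_sub_lt (c : Pt n) (r : ℝ) :
    IsOpen {p : Pt n | ∀ i, |p.1 i - c.1 i| < r} := by
  simp only [ofPred_forall]
  exact isOpen_iInter_of_finite fun i => isOpen_lt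
    (((EuclideanSpace.proj i).continuous.comp continuous_fst).sub continuous_const).abs
    continuous_const

theorem isOpen_pcube (c : Pt n) (r : ℝ) : IsOpen (pcube n c r) :=
  (isOpen_setOf_forall_abs_sub_lt c r).inter
    ((isOpen_lt continuous_const continuous_snd).inter (isOpen_lt continuous_snd continuous_const))

theorem isOpen_pcubePlus (c : Pt n) (r : ℝ) : IsOpen (pcubePlus n c r) :=
  (isOpen_setOf_forall_abs_sub_lt c r).inter
    ((isOpen_lt continuous_const continuous_snd).inter (isOpen_lt continuous_snd continuous_const))

theorem mem_pcube_self {c : Pt n} {r : ℝ} (hr : 0 < r) : c ∈ pcube n c r := by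
  have : 0 < r ^ 2 := by positivity
  exact ⟨fun i => by simpa using hr, by linarith, by linarith⟩

theorem abs_sub_lt_of_abs_sub_le {x y z r s : ℝ} (hxy : |x - y| < r) (hyz : |y - z| ≤ s - r) :
    |x - z| < s := by
  calc |x - z| ≤ |x - y| + |y - z| := abs_sub_le x y z
    _ < s := by linarith

theorem pcubeMinus_subset_pcubeMinus {c c' : Pt n} {r s : ℝ} (hr : 0 ≤ r) (hrs : r ≤ s)
    (ht : c.2 = c'.2) (hX : ∀ i, |c.1 i - c'.1 i| ≤ s - r) :
    pcubeMinus n c r ⊆ pcubeMinus n c' s := by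
  rintro x ⟨hxX, hxlow, hxup⟩
  have : r ^ 2 ≤ s ^ 2 := pow_le_pow_left₀ hr hrs 2
  exact ⟨fun i => abs_sub_lt_of_abs_sub_le (hxX i) (hX i), by linarith, by linarith⟩

theorem pcubePlus_subset_pcubePlus {c c' : Pt n} {r s : ℝ} (hr : 0 ≤ r) (hrs : r ≤ s)
    (ht : c.2 = c'.2) (hX : ∀ i, |c.1 i - c'.1 i| ≤ s - r) :
    pcubePlus n c r ⊆ pcubePlus n c' s := by
  rintro x ⟨hxX, hxlow, hxup⟩
  have : r ^ 2 ≤ s ^ 2 := pow_le_pow_left₀ hr hrs 2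
  exact ⟨fun i => abs_sub_lt_of_abs_sub_le (hxX i) (hX i), by linarith, by linarith⟩

theorem pcubeMinus_mono {c : Pt n} {r s : ℝ} (hr : 0 ≤ r) (hrs : r ≤ s) :
    pcubeMinus n c r ⊆ pcubeMinus n c s :=
  pcubeMinus_subset_pcubeMinus hr hrs rfl fun _ => by simpa using hrs

theorem pcubePlus_mono {c : Pt n} {r s : ℝ} (hr : 0 ≤ r) (hrs : r ≤ s) :
    pcubePlus n c r ⊆ pcubePlus n c s :=
  pcubePlus_subset_pcubePlus hr hrs rfl fun _ => by simpa using hrs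

end ParabolicCubes

section SingularBoundary

variable {n : ℕ} {Ω : Set (Pt n)} {p : Pt n}

theorem exists_radius_of_mem_singBdry (hp : p ∈ singBdry n Ω) :
    ∃ ε > 0, pcubeMinus n p ε ⊆ Ω ∧ pcubePlus n p ε ∩ Ω = ∅ := by
  obtain ⟨⟨-, ε₁, hε₁, hminus⟩, ε₂, hε₂, hplus⟩ := hp
  have hε : 0 < min ε₁ ε₂ := lt_min hε₁ hε₂
  refine ⟨min ε₁ ε₂, hε, (pcubeMinus_mono hε.le (min_le_left _ _)).trans hminus, ?_⟩
  exact subset_eq_empty (inter_subset_inter_left Ω (pcubePlus_mono hε.le (min_le_right _ _))) hplus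

theorem snd_eq_of_mem_frontier_of_mem_pcube (hΩ : IsOpen Ω) {ε : ℝ}
    (hminus : pcubeMinus n p ε ⊆ Ω) (hplus : pcubePlus n p ε ∩ Ω = ∅) {q : Pt n}
    (hqΩ : q ∈ frontier Ω) (hq : q ∈ pcube n p ε) : q.2 = p.2 := by
  obtain ⟨hqX, hqlow, hqup⟩ := hq
  rcases lt_trichotomy q.2 p.2 with hlt | heq | hgt
  · have hqin : q ∈ Ω := hminus ⟨hqX, hqlow, hlt⟩
    exact absurd hqin (hΩ.frontier_eq ▸ hqΩ).2
  · exact heq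
  · exact absurd hplus
      (mem_closure_iff.mp hqΩ.1 _ (isOpen_pcubePlus p ε) ⟨hqX, hgt, hqup⟩).ne_empty

theorem singBdry_mem_nhdsWithin_frontier (hΩ : IsOpen Ω) (hp : p ∈ singBdry n Ω) :
    singBdry n Ω ∈ 𝓝[frontier Ω] p := by
  obtain ⟨ε, hε, hminus, hplus⟩ := exists_radius_of_mem_singBdry hp
  set δ := ε / 2
  have hδ : 0 < δ := by positivity
  have hδε : δ ≤ ε := half_le_self hε.le
  have hnear : ∀ q ∈ pcube n p δ, ∀ i, |q.1 i - p.1 i| ≤ ε - δ := fun q hq i =>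
    (hq.1 i).le.trans_eq (by ring)
  have hminusδ : pcubeMinus n p δ ⊆ Ω := (pcubeMinus_mono hδ.le hδε).trans hminus
  have hplusδ : pcubePlus n p δ ∩ Ω = ∅ :=
    subset_eq_empty (inter_subset_inter_left Ω (pcubePlus_mono hδ.le hδε)) hplus
  refine mem_nhdsWithin_iff_exists_mem_nhds_inter.mpr
    ⟨pcube n p δ, (isOpen_pcube p δ).mem_nhds (mem_pcube_self hδ), ?_⟩
  rintro q ⟨hq, hqΩ⟩
  have ht : q.2 = p.2 := snd_eq_of_mem_frontier_of_mem_pcube hΩ hminusδ hplusδ hqΩ hq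
  refine ⟨⟨hqΩ, δ, hδ, ?_⟩, δ, hδ, ?_⟩
  · exact (pcubeMinus_subset_pcubeMinus hδ.le hδε ht (hnear q hq)).trans hminus
  · exact subset_eq_empty (inter_subset_inter_left Ω
      (pcubePlus_subset_pcubePlus hδ.le hδε ht (hnear q hq))) hplus

end SingularBoundary

/-- the essential boundary is closed. -/
theorem statement_1 (n : ℕ) (Ω : Set (Pt n)) (hΩ : IsOpen Ω) :
    IsClosed (essBdry n Ω) :=
  isClosed_frontier.sdiff_of_forall_mem_nhdsWithin fun _ hp =>
    singBdry_mem_nhdsWithin_frontier hΩ hp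
end
end

section
/- For every open set Ω ⊂ ℝⁿ⁺¹, the quasi-lateral boundary Σ of Ω is a closed subset of ℝⁿ⁺¹. -/
open MeasureTheory Set Filter Topology

noncomputable section

/-- Coordinate bound in Euclidean space. -/
lemma coord_le_norm (n : ℕ) (x : EuclideanSpace ℝ (Fin n)) (i : Fin n) : |x i| ≤ ‖x‖ := by
  rw [EuclideanSpace.norm_eq]
  have h : |x i| = Real.sqrt (‖x i‖ ^ 2) := by rw [Real.sqrt_sq_eq_abs]; simp
  rw [h]
  apply Real.sqrt_le_sqrt
  exact Finset.single_le_sum (f := fun j => ‖x j‖ ^ 2) (fun j _ => by positivity)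
    (Finset.mem_univ i)

lemma time_le_Tmax (n : ℕ) (Ω : Set (Pt n)) {q : Pt n} (hq : q ∈ closure Ω) :
    (q.2 : EReal) ≤ parTmax n Ω := by
  have hcl : IsClosed {p : Pt n | (p.2 : EReal) ≤ parTmax n Ω} := by
    have hc : Continuous fun p : Pt n => (p.2 : EReal) :=
      continuous_coe_real_ereal.comp continuous_snd
    exact isClosed_le hc continuous_const
  exact hcl.closure_subset_iff.mpr
    (fun p hp => le_iSup₂ (f := fun (p : Pt n) (_ : p ∈ Ω) => (p.2 : EReal)) p hp) hq

lemma Tmin_le_time (n : ℕ) (Ω : Set (Pt n)) {q : Pt n} (hq : q ∈ closure Ω) :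
    parTmin n Ω ≤ (q.2 : EReal) := by
  have hcl : IsClosed {p : Pt n | parTmin n Ω ≤ (p.2 : EReal)} := by
    have hc : Continuous fun p : Pt n => (p.2 : EReal) :=
      continuous_coe_real_ereal.comp continuous_snd
    exact isClosed_le continuous_const hc
  exact hcl.closure_subset_iff.mpr
    (fun p hp => iInf₂_le (f := fun (p : Pt n) (_ : p ∈ Ω) => (p.2 : EReal)) p hp) hq

/-- The removed set is relatively open in the frontier. -/
lemma removed_locally_all (n : ℕ) (Ω : Set (Pt n)) (hΩ : IsOpen Ω) (p : Pt n)
    (hp : p ∈ ({p | p ∈ bottomBdry n Ω ∧ (p.2 : EReal) = parTmin n Ω} ∪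
     {p | p ∈ singBdry n Ω ∧ (p.2 : EReal) = parTmax n Ω})) :
    ∃ V ∈ 𝓝 p, ∀ q ∈ V, q ∈ frontier Ω →
      q ∈ ({p | p ∈ bottomBdry n Ω ∧ (p.2 : EReal) = parTmin n Ω} ∪
        {p | p ∈ singBdry n Ω ∧ (p.2 : EReal) = parTmax n Ω}) := by
  have hfr : frontier Ω ∩ Ω = ∅ := by
    rw [hΩ.frontier_eq]
    ext x; simp (config := { contextual := true }) [and_assoc]
  rcases hp with ⟨⟨hpb, hpplus⟩, hptmin⟩ | ⟨⟨⟨hpfr, hεm⟩, hεp⟩, hptmax⟩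
  · -- bottom case
    obtain ⟨ε, hε, hsub⟩ := hpplus
    refine ⟨Metric.ball p.1 (ε / 2) ×ˢ Metric.ball p.2 (ε ^ 2 / 2),
      prod_mem_nhds (Metric.ball_mem_nhds _ (by positivity))
        (Metric.ball_mem_nhds _ (by positivity)), ?_⟩
    rintro q ⟨hq1, hq2⟩ hqfr
    have hq1' : ∀ i, |q.1 i - p.1 i| < ε / 2 := by
      intro i
      have := coord_le_norm n (q.1 - p.1) i
      simp only [PiLp.sub_apply] at this
      calc |q.1 i - p.1 i| ≤ ‖q.1 - p.1‖ := this
        _ < ε / 2 := by rwa [← dist_eq_norm]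
    have hq2' : |q.2 - p.2| < ε ^ 2 / 2 := by rw [Metric.mem_ball, Real.dist_eq] at hq2; exact hq2
    have hqnot : q ∉ Ω := fun h => absurd (Set.mem_inter hqfr h) (by rw [hfr]; simp)
    -- q.2 ≤ p.2
    have hle : q.2 ≤ p.2 := by
      by_contra hlt
      push_neg at hlt
      apply hqnot
      apply hsub
      refine ⟨fun i => lt_of_lt_of_le (hq1' i) (by linarith), hlt, ?_⟩
      have := abs_lt.mp hq2'
      linarith
    -- q.2 ≥ p.2 via Tmin
    have hge : (p.2 : EReal) ≤ (q.2 : EReal) := by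
      rw [hptmin]
      exact Tmin_le_time n Ω (frontier_subset_closure hqfr)
    have heq : q.2 = p.2 := le_antisymm hle (by exact_mod_cast hge)
    left
    have hqtmin : (q.2 : EReal) = parTmin n Ω := by rw [heq]; exact hptmin
    refine ⟨⟨⟨hqfr, ?_⟩, ⟨ε / 2, by positivity, ?_⟩⟩, hqtmin⟩
    · -- parabolic boundary condition
      intro r hr
      refine ⟨(q.1, q.2 - r ^ 2 / 2), ⟨fun i => by simpa using hr, by nlinarith, by nlinarith⟩, ?_⟩
      intro hmem
      have h1 : parTmin n Ω ≤ ((q.2 - r ^ 2 / 2 : ℝ) : EReal) :=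
        iInf₂_le (f := fun (p : Pt n) (_ : p ∈ Ω) => (p.2 : EReal)) _ hmem
      rw [← hqtmin] at h1
      have : (q.2 : ℝ) ≤ q.2 - r ^ 2 / 2 := by exact_mod_cast h1
      nlinarith
    · -- pcubePlus q (ε/2) ⊆ Ω
      intro x hx
      obtain ⟨hx1, hx2, hx3⟩ := hx
      apply hsub
      refine ⟨fun i => ?_, by rw [heq] at hx2; exact hx2, ?_⟩
      · calc |x.1 i - p.1 i| ≤ |x.1 i - q.1 i| + |q.1 i - p.1 i| := abs_sub_le _ _ _
          _ < ε / 2 + ε / 2 := add_lt_add (hx1 i) (hq1' i)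
          _ = ε := by ring
      · rw [heq] at hx3; nlinarith
  · -- singular case
    obtain ⟨ε₁, hε₁, hsub₁⟩ := hεm
    obtain ⟨ε₂, hε₂, hsub₂⟩ := hεp
    set ε := min ε₁ ε₂ with hεdef
    have hε : 0 < ε := lt_min hε₁ hε₂
    refine ⟨Metric.ball p.1 (ε / 2) ×ˢ Metric.ball p.2 (ε ^ 2 / 2),
      prod_mem_nhds (Metric.ball_mem_nhds _ (by positivity))
        (Metric.ball_mem_nhds _ (by positivity)), ?_⟩
    rintro q ⟨hq1, hq2⟩ hqfr
    have hq1' : ∀ i, |q.1 i - p.1 i| < ε / 2 := by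
      intro i
      have := coord_le_norm n (q.1 - p.1) i
      simp only [PiLp.sub_apply] at this
      calc |q.1 i - p.1 i| ≤ ‖q.1 - p.1‖ := this
        _ < ε / 2 := by rwa [← dist_eq_norm]
    have hq2' : |q.2 - p.2| < ε ^ 2 / 2 := by rw [Metric.mem_ball, Real.dist_eq] at hq2; exact hq2
    have hqnot : q ∉ Ω := fun h => absurd (Set.mem_inter hqfr h) (by rw [hfr]; simp)
    have hε1e : ε ≤ ε₁ := min_le_left _ _
    have hε2e : ε ≤ ε₂ := min_le_right _ _
    -- q.2 ≤ p.2 via Tmax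
    have hle : (q.2 : EReal) ≤ (p.2 : EReal) := by
      rw [hptmax]
      exact time_le_Tmax n Ω (frontier_subset_closure hqfr)
    have hle' : q.2 ≤ p.2 := by exact_mod_cast hle
    -- q.2 ≥ p.2
    have hge : p.2 ≤ q.2 := by
      by_contra hlt
      push_neg at hlt
      apply hqnot
      apply hsub₁
      refine ⟨fun i => lt_of_lt_of_le (hq1' i) (by linarith), ?_, hlt⟩
      have := abs_lt.mp hq2'
      nlinarith
    have heq : q.2 = p.2 := le_antisymm hle' hge
    right
    have hqtmax : (q.2 : EReal) = parTmax n Ω := by rw [heq]; exact hptmax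
    refine ⟨⟨⟨hqfr, ⟨ε / 2, by positivity, ?_⟩⟩, ⟨ε / 2, by positivity, ?_⟩⟩, hqtmax⟩
    · -- pcubeMinus q (ε/2) ⊆ Ω
      intro x hx
      obtain ⟨hx1, hx2, hx3⟩ := hx
      apply hsub₁
      refine ⟨fun i => ?_, ?_, by rw [heq] at hx3; exact hx3⟩
      · calc |x.1 i - p.1 i| ≤ |x.1 i - q.1 i| + |q.1 i - p.1 i| := abs_sub_le _ _ _
          _ < ε / 2 + ε / 2 := add_lt_add (hx1 i) (hq1' i)
          _ = ε := by ring
          _ ≤ ε₁ := hε1e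
      · rw [heq] at hx2; nlinarith
    · -- pcubePlus q (ε/2) ∩ Ω = ∅
      rw [Set.eq_empty_iff_forall_notMem]
      rintro x ⟨⟨hx1, hx2, hx3⟩, hxΩ⟩
      have : x ∈ pcubePlus n p ε₂ ∩ Ω := by
        refine ⟨⟨fun i => ?_, by rw [heq] at hx2; exact hx2, ?_⟩, hxΩ⟩
        · calc |x.1 i - p.1 i| ≤ |x.1 i - q.1 i| + |q.1 i - p.1 i| := abs_sub_le _ _ _
            _ < ε / 2 + ε / 2 := add_lt_add (hx1 i) (hq1' i)
            _ = ε := by ring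
            _ ≤ ε₂ := hε2e
        · rw [heq] at hx3; nlinarith
      rw [hsub₂] at this
      exact this

/-- the quasi-lateral boundary is closed. -/
theorem statement_2 (n : ℕ) (Ω : Set (Pt n)) (hΩ : IsOpen Ω) :
    IsClosed (quasiLateral n Ω) :=  by
  rw [← isOpen_compl_iff]
  rw [isOpen_iff_mem_nhds]
  intro p hp
  by_cases hpf : p ∈ frontier Ω
  · have hpR : p ∈ ({p | p ∈ bottomBdry n Ω ∧ (p.2 : EReal) = parTmin n Ω} ∪
        {p | p ∈ singBdry n Ω ∧ (p.2 : EReal) = parTmax n Ω}) := by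
      by_contra h
      exact hp ⟨hpf, h⟩
    obtain ⟨V, hV, hVsub⟩ := removed_locally_all n Ω hΩ p hpR
    filter_upwards [hV] with q hq
    intro hqS
    exact hqS.2 (hVsub q hq hqS.1)
  · have : (frontier Ω)ᶜ ∈ 𝓝 p := (isClosed_frontier.isOpen_compl).mem_nhds hpf
    filter_upwards [this] with q hq
    intro hqS
    exact hq hqS.1
end
end

section
/- Let n ≥ 1, let Σ ⊂ ℝⁿ⁺¹ be a closed set, and let σ be a Borel measure on ℝⁿ⁺¹ supported in Σ. Let (x₀,t₀) ∈ Σ, r > 0, M₀ ≥ 1 and c > 0. Assume the upper ADR bound σ(Q_ρ(z,τ) ∩ Σ) ≤ M₀ρⁿ⁺¹ for every (z,τ) ∈ Σ and every 0 < ρ ≤ r, and assume the time-backwards lower bound σ(Q_r⁻(x₀,t₀) ∩ Σ) ≥ c·rⁿ⁺¹. Then there exist a ∈ (0,1/2) and b > 0, depending only on n, M₀ and c, such that σ(Σ ∩ Q_r⁻(x₀,t₀) ∩ {(y,s) : s < t₀ − (ar)²}) ≥ b·rⁿ⁺¹; in particular σ(Σ ∩ Q_r⁻(x₀, t₀ −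 (ar)²)) ≥ b·rⁿ⁺¹. -/
open MeasureTheory Set Filter Topology

noncomputable section

/-! The piece of `S ∩ Q_r⁻(x₀)` lying in the top time slab of thickness `(a r)²` is covered by
`K = 2 / a` spatial grid cells per coordinate, each of which sits inside a parabolic cube of
radius `a r` centred at one of its own points. The upper ADR bound then gives the slab mass
`≤ Kⁿ M₀ (a r)ⁿ⁺¹ = 2ⁿ⁺¹ M₀ rⁿ⁺¹ / K`, which is at most half of the lower bound `c rⁿ⁺¹` once
`K` is large; the other half lies strictly below the slab. -/

variable {n : ℕ}

lemma mem_pcube_of_abs_sub_lt {p z : Pt n} {h : ℝ} (hX : ∀ i, |p.1 i - z.1 i| < h)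
    (ht : |p.2 - z.2| < h ^ 2) : p ∈ pcube n z h := by
  rw [abs_lt] at ht
  exact ⟨hX, by linarith, by linarith⟩

lemma pcubeMinus_inter_setOf_lt_subset (x : Pt n) (r : ℝ) {δ : ℝ} (hδ : 0 ≤ δ) :
    pcubeMinus n x r ∩ {p | p.2 < x.2 - δ} ⊆ pcubeMinus n (x.1, x.2 - δ) r := by
  rintro p ⟨⟨hX, hlo, -⟩, hhi⟩
  exact ⟨hX, by dsimp only; linarith, hhi⟩

def gridCell (lo : Fin n → ℝ) (h : ℝ) (k : Fin n → ℕ) : Set (Pt n) :=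
  {p | ∀ i, lo i + k i * h ≤ p.1 i ∧ p.1 i < lo i + (k i + 1) * h}

lemma abs_sub_lt_of_mem_gridCell {lo : Fin n → ℝ} {h : ℝ} {k : Fin n → ℕ} {p q : Pt n}
    (hp : p ∈ gridCell lo h k) (hq : q ∈ gridCell lo h k) (i : Fin n) :
    |p.1 i - q.1 i| < h := by
  obtain ⟨hp₁, hp₂⟩ := hp i
  obtain ⟨hq₁, hq₂⟩ := hq i
  rw [abs_lt]
  constructor <;> linarith

lemma exists_lt_floor_mem_Ico {y lo h : ℝ} {K : ℕ} (hh : 0 < h) (hlo : lo ≤ y)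
    (hhi : y < lo + K * h) : ∃ k < K, lo + k * h ≤ y ∧ y < lo + (k + 1) * h := by
  have hq : 0 ≤ (y - lo) / h := div_nonneg (sub_nonneg.2 hlo) hh.le
  refine ⟨⌊(y - lo) / h⌋₊, ?_, ?_, ?_⟩
  · rw [Nat.floor_lt hq, div_lt_iff₀ hh]
    linarith
  · have := Nat.floor_le hq
    rw [le_div_iff₀ hh] at this
    linarith
  · have := Nat.lt_floor_add_one ((y - lo) / h)
    rw [div_lt_iff₀ hh] at this
    linarith

lemma subset_iUnion_gridCell {s : Set (Pt n)} {lo : Fin n → ℝ} {h : ℝ} {K : ℕ} (hh : 0 < h)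
    (hs : ∀ p ∈ s, ∀ i, lo i ≤ p.1 i ∧ p.1 i < lo i + K * h) :
    s ⊆ ⋃ k : Fin n → Fin K, gridCell lo h (fun i => k i) := by
  intro p hp
  choose k hkK hk using fun i => exists_lt_floor_mem_Ico hh (hs p hp i).1 (hs p hp i).2
  exact mem_iUnion.2 ⟨fun i => ⟨k i, hkK i⟩, hk⟩

lemma measure_le_of_measure_pcube_inter_le (σ : Measure (Pt n)) {s : Set (Pt n)}
    {lo : Fin n → ℝ} {h : ℝ} {K : ℕ} {m : ENNReal} (hh : 0 < h)
    (hspace : ∀ p ∈ s, ∀ i, lo i ≤ p.1 i ∧ p.1 i < lo i + K * h)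
    (htime : ∀ p ∈ s, ∀ q ∈ s, |p.2 - q.2| < h ^ 2)
    (hm : ∀ z ∈ s, σ (pcube n z h ∩ s) ≤ m) :
    σ s ≤ K ^ n * m := by
  have hcell : ∀ k : Fin n → ℕ, σ (s ∩ gridCell lo h k) ≤ m := by
    intro k
    rcases (s ∩ gridCell lo h k).eq_empty_or_nonempty with hempty | ⟨z, hzs, hzk⟩
    · simp [hempty]
    have hsub : s ∩ gridCell lo h k ⊆ pcube n z h ∩ s := fun p hp =>
      ⟨mem_pcube_of_abs_sub_lt (abs_sub_lt_of_mem_gridCell hp.2 hzk) (htime p hp.1 z hzs), hp.1⟩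
    exact (measure_mono hsub).trans (hm z hzs)
  calc σ s ≤ σ (⋃ k : Fin n → Fin K, s ∩ gridCell lo h (fun i => k i)) := by
        rw [← inter_iUnion]
        exact measure_mono (subset_inter subset_rfl (subset_iUnion_gridCell hh hspace))
    _ ≤ ∑ k : Fin n → Fin K, σ (s ∩ gridCell lo h (fun i => k i)) :=
        measure_iUnion_fintype_le σ _
    _ ≤ ∑ _k : Fin n → Fin K, m := Finset.sum_le_sum fun k _ => hcell _
    _ = K ^ n * m := by simp [Finset.card_univ]

lemma measure_inter_pcubeMinus_inter_timeSlab_le (σ : Measure (Pt n)) {S : Set (Pt n)}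
    {x₀ : Pt n} {r h M₀ : ℝ} {K : ℕ} (hh : 0 < h) (hhr : h ≤ r) (hK : 2 * r ≤ K * h)
    (hADR : ∀ z ∈ S, ∀ ρ : ℝ, 0 < ρ → ρ ≤ r →
      σ (pcube n z ρ ∩ S) ≤ ENNReal.ofReal (M₀ * ρ ^ (n + 1))) :
    σ (pcubeMinus n x₀ r ∩ S ∩ {p | x₀.2 - h ^ 2 ≤ p.2}) ≤
      ENNReal.ofReal (K ^ n * (M₀ * h ^ (n + 1))) := by
  rw [ENNReal.ofReal_mul (by positivity), ENNReal.ofReal_pow (Nat.cast_nonneg K),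
    ENNReal.ofReal_natCast]
  refine measure_le_of_measure_pcube_inter_le σ (lo := fun i => x₀.1 i - r) hh ?_ ?_ ?_
  · rintro p ⟨⟨⟨hX, -⟩, -⟩, -⟩ i
    have := abs_lt.1 (hX i)
    constructor <;> linarith
  · rintro p ⟨⟨⟨-, -, hp⟩, -⟩, hp' : x₀.2 - h ^ 2 ≤ p.2⟩ q ⟨⟨⟨-, -, hq⟩, -⟩, hq' : x₀.2 - h ^ 2 ≤ q.2⟩
    rw [abs_lt]
    constructor <;> linarith
  · rintro z ⟨⟨-, hzS⟩, -⟩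
    exact (measure_mono (inter_subset_inter_right _ fun p hp => hp.1.2)).trans
      (hADR z hzS h hh hhr)

lemma natCast_pow_mul_mul_two_div_mul_pow_le {M c r : ℝ} {K : ℕ} (hK : 0 < K) (hr : 0 ≤ r)
    (hKM : 2 ^ (n + 2) * M ≤ c * K) :
    (K : ℝ) ^ n * (M * (2 / K * r) ^ (n + 1)) ≤ c / 2 * r ^ (n + 1) := by
  have hK' : (0 : ℝ) < K := Nat.cast_pos.2 hK
  calc (K : ℝ) ^ n * (M * (2 / K * r) ^ (n + 1)) = 2 ^ (n + 2) * M * r ^ (n + 1) / (2 * K) := by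
        rw [div_mul_eq_mul_div, div_pow, mul_pow, pow_succ (K : ℝ)]
        field_simp
        ring
    _ ≤ c * K * r ^ (n + 1) / (2 * K) := by gcongr
    _ = c / 2 * r ^ (n + 1) := by field_simp

lemma le_measure_diff_of_two_mul_le {α : Type*} [MeasurableSpace α] (μ : Measure α)
    {A B : Set α} {m : ENNReal} (hm : m ≠ ⊤) (hA : 2 * m ≤ μ A) (hB : μ (A ∩ B) ≤ m) :
    m ≤ μ (A \ B) := by
  refine ENNReal.le_of_add_le_add_left hm ?_
  calc m + m = 2 * m := (two_mul m).symm
    _ ≤ μ (A ∩ B ∪ A \ B) := by rwa [inter_union_sdiff]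
    _ ≤ μ (A ∩ B) + μ (A \ B) := measure_union_le _ _
    _ ≤ m + μ (A \ B) := by gcongr

theorem statement_5_general (n : ℕ) (M₀ c : ℝ) (hc : 0 < c) :
    ∃ a b : ℝ, a ∈ Set.Ioo (0 : ℝ) (1 / 2) ∧ 0 < b ∧
      ∀ (S : Set (Pt n)) (σ : Measure (Pt n)) (x₀ : Pt n) (r : ℝ),
        IsClosed S → σ Sᶜ = 0 → x₀ ∈ S → 0 < r →
        (∀ z ∈ S, ∀ ρ : ℝ, 0 < ρ → ρ ≤ r →
          σ (pcube n z ρ ∩ S) ≤ ENNReal.ofReal (M₀ * ρ ^ (n + 1))) →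
        ENNReal.ofReal (c * r ^ (n + 1)) ≤ σ (pcubeMinus n x₀ r ∩ S) →
        ENNReal.ofReal (b * r ^ (n + 1)) ≤
            σ (S ∩ pcubeMinus n x₀ r ∩ {p | p.2 < x₀.2 - (a * r) ^ 2}) ∧
        ENNReal.ofReal (b * r ^ (n + 1)) ≤
            σ (S ∩ pcubeMinus n (x₀.1, x₀.2 - (a * r) ^ 2) r) := by
  obtain ⟨K, hK⟩ := exists_nat_gt (max 4 (2 ^ (n + 2) * M₀ / c))
  have hK4 : (4 : ℝ) < K := (le_max_left _ _).trans_lt hK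
  have hKM : 2 ^ (n + 2) * M₀ ≤ c * K :=
    ((div_lt_iff₀' hc).1 ((le_max_right _ _).trans_lt hK)).le
  have hK0 : 0 < K := by exact_mod_cast (by linarith : (0 : ℝ) < K)
  refine ⟨2 / K, c / 2, ⟨by positivity, by rw [div_lt_iff₀ (by positivity)]; linarith⟩,
    half_pos hc, ?_⟩
  intro S σ x₀ r _ _ _ hr hADR hlow
  set h := 2 / K * r
  have hhr : h ≤ r := mul_le_of_le_one_left hr.le ((div_le_one (by positivity)).2 (by linarith))
  have hKh : 2 * r ≤ K * h := le_of_eq <| by simp only [h]; field_simp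
  have hslab : σ (pcubeMinus n x₀ r ∩ S ∩ {p | x₀.2 - h ^ 2 ≤ p.2}) ≤
      ENNReal.ofReal (c / 2 * r ^ (n + 1)) :=
    (measure_inter_pcubeMinus_inter_timeSlab_le σ (by positivity) hhr hKh hADR).trans
      (ENNReal.ofReal_le_ofReal (natCast_pow_mul_mul_two_div_mul_pow_le hK0 hr.le hKM))
  have hpast : ENNReal.ofReal (c / 2 * r ^ (n + 1)) ≤
      σ ((pcubeMinus n x₀ r ∩ S) \ {p | x₀.2 - h ^ 2 ≤ p.2}) := by
    refine le_measure_diff_of_two_mul_le σ ENNReal.ofReal_ne_top (hlow.trans_eq' ?_) hslab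
    rw [two_mul, ← ENNReal.ofReal_add (by positivity) (by positivity)]
    ring_nf
  have hsub : (pcubeMinus n x₀ r ∩ S) \ {p | x₀.2 - h ^ 2 ≤ p.2} ⊆
      S ∩ pcubeMinus n x₀ r ∩ {p | p.2 < x₀.2 - h ^ 2} :=
    fun p ⟨⟨hpQ, hpS⟩, ht⟩ => ⟨⟨hpS, hpQ⟩, (lt_of_not_ge ht : p.2 < _)⟩
  refine ⟨hpast.trans (measure_mono hsub), hpast.trans (measure_mono fun p hp => ?_)⟩
  obtain ⟨⟨hpS, hpQ⟩, ht⟩ := hsub hp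
  exact ⟨hpS, pcubeMinus_inter_setOf_lt_subset x₀ r (sq_nonneg h) ⟨hpQ, ht⟩⟩

/-- time-backwards ADR self-improves: a definite proportion of the mass of a
backward surface cube lives strictly backwards in time (Claim 1 of Appendix A / Remark 1.8). -/
theorem statement_5 (n : ℕ) (hn : 1 ≤ n) (M₀ c : ℝ) (hM₀ : 1 ≤ M₀) (hc : 0 < c) :
    ∃ a b : ℝ, a ∈ Set.Ioo (0 : ℝ) (1 / 2) ∧ 0 < b ∧
      ∀ (S : Set (Pt n)) (σ : Measure (Pt n)) (x₀ : Pt n) (r : ℝ),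
        IsClosed S → σ Sᶜ = 0 → x₀ ∈ S → 0 < r →
        (∀ z ∈ S, ∀ ρ : ℝ, 0 < ρ → ρ ≤ r →
          σ (pcube n z ρ ∩ S) ≤ ENNReal.ofReal (M₀ * ρ ^ (n + 1))) →
        ENNReal.ofReal (c * r ^ (n + 1)) ≤ σ (pcubeMinus n x₀ r ∩ S) →
        ENNReal.ofReal (b * r ^ (n + 1)) ≤
            σ (S ∩ pcubeMinus n x₀ r ∩ {p | p.2 < x₀.2 - (a * r) ^ 2}) ∧
        ENNReal.ofReal (b * r ^ (n + 1)) ≤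
            σ (S ∩ pcubeMinus n (x₀.1, x₀.2 - (a * r) ^ 2) r) :=
  statement_5_general n M₀ c hc
end
end

section
/- Let n ≥ 1 and let Σ ⊂ ℝⁿ⁺¹ be a closed set whose parabolic diameter is infinite. Let σ be a Borel measure on ℝⁿ⁺¹ supported in Σ satisfying the ADR condition M₀⁻¹ρⁿ⁺¹ ≤ σ(Q_ρ(z,τ) ∩ Σ) ≤ M₀ρⁿ⁺¹ for every (z,τ) ∈ Σ and every 0 < ρ < ∞, where M₀ ≥ 1. Then the time-span of Σ is infinite: sup{t : (x,t) ∈ Σ} − inf{t : (x,t) ∈ Σ} = ∞. -/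
open MeasureTheory Set Filter Topology

noncomputable section

/-! If the times of `S` lie in an interval of length `< r²`, then inside a cube `Q_{mr}(z)` the
set `S` is covered by `(2m)ⁿ` cubes of size `r` (one per spatial lattice cell), so the upper ADR
bound gives `σ(Q_{mr}(z) ∩ S) ≲ mⁿ rⁿ⁺¹`: `S` grows at most `n`-dimensionally at large scales.
This contradicts the lower ADR bound `σ(Q_{mr}(z) ∩ S) ≳ (mr)ⁿ⁺¹` once `m` is large. -/

namespace ParabolicADR

theorem exists_sub_le_of_iSup_sub_iInf_ne_top {α : Type*} {S : Set α} {f : α → ℝ}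
    (h : (⨆ p ∈ S, (f p : EReal)) - (⨅ p ∈ S, (f p : EReal)) ≠ ⊤) :
    ∃ T : ℝ, ∀ p ∈ S, ∀ q ∈ S, f p - f q ≤ T := by
  refine ⟨((⨆ p ∈ S, (f p : EReal)) - (⨅ p ∈ S, (f p : EReal))).toReal, fun p hp q hq => ?_⟩
  have hpq : ((f p - f q : ℝ) : EReal) ≤ (⨆ p ∈ S, (f p : EReal)) - (⨅ p ∈ S, (f p : EReal)) :=
    EReal.sub_le_sub (le_iSup₂ (f := fun p (_ : p ∈ S) => (f p : EReal)) p hp)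
      (iInf₂_le (f := fun p (_ : p ∈ S) => (f p : EReal)) q hq)
  exact EReal.coe_le_coe_iff.1 (hpq.trans (EReal.le_coe_toReal h))

theorem abs_sub_lt_of_floor_div_eq {x y r : ℝ} (hr : 0 < r) (h : ⌊x / r⌋ = ⌊y / r⌋) :
    |x - y| < r := by
  have := Int.abs_sub_lt_one_of_floor_eq_floor h
  rwa [← sub_div, abs_div, abs_of_pos hr, div_lt_one hr] at this

theorem floor_div_mem_Ico {x r : ℝ} {m : ℕ} (hr : 0 < r) (h : |x| < m * r) :
    ⌊x / r⌋ ∈ Finset.Ico (-(m : ℤ)) m := by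
  rw [abs_lt] at h
  rw [Finset.mem_Ico, Int.le_floor, Int.floor_lt, le_div_iff₀ hr, div_lt_iff₀ hr]
  push_cast
  constructor <;> linarith

/-- The lattice cell of side `r`, anchored at `z`, that contains the spatial part of `p`. -/
def cellIndex (n : ℕ) (z : Pt n) (r : ℝ) (p : Pt n) : Fin n → ℤ :=
  fun i => ⌊(p.1 i - z.1 i) / r⌋

theorem mapsTo_cellIndex_pcube (n : ℕ) (z : Pt n) {r : ℝ} (hr : 0 < r) (m : ℕ) :
    MapsTo (cellIndex n z r) (pcube n z (m * r))
      ↑(Fintype.piFinset fun _ : Fin n => Finset.Ico (-(m : ℤ)) m) := fun _ hp =>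
  Fintype.mem_piFinset.2 fun i => floor_div_mem_Ico hr (hp.1 i)

theorem mem_pcube_of_cellIndex_eq {n : ℕ} {z p w : Pt n} {r : ℝ} (hr : 0 < r)
    (hpw : cellIndex n z r p = cellIndex n z r w) (ht : |p.2 - w.2| < r ^ 2) :
    p ∈ pcube n w r := by
  refine ⟨fun i => ?_, by linarith [(abs_lt.1 ht).1], by linarith [(abs_lt.1 ht).2]⟩
  have := abs_sub_lt_of_floor_div_eq hr (congrFun hpw i)
  rwa [sub_sub_sub_cancel_right] at this

theorem measure_pcube_inter_le {n : ℕ} {S : Set (Pt n)} {σ : Measure (Pt n)} {r : ℝ}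
    {C : ENNReal} (hr : 0 < r) (hspan : ∀ p ∈ S, ∀ q ∈ S, |p.2 - q.2| < r ^ 2)
    (hC : ∀ w ∈ S, σ (pcube n w r ∩ S) ≤ C) (z : Pt n) (m : ℕ) :
    σ (pcube n z (m * r) ∩ S) ≤ ((2 * m) ^ n : ℕ) * C := by
  set F := Fintype.piFinset fun (_ : Fin n) => Finset.Ico (-(m : ℤ)) m
  have hcell : ∀ k, σ (cellIndex n z r ⁻¹' {k} ∩ S) ≤ C := by
    intro k
    rcases (cellIndex n z r ⁻¹' {k} ∩ S).eq_empty_or_nonempty with he | ⟨w, hwk, hwS⟩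
    · simp [he]
    · have hsub : cellIndex n z r ⁻¹' {k} ∩ S ⊆ pcube n w r ∩ S := fun p hp =>
        ⟨mem_pcube_of_cellIndex_eq hr (hp.1.trans hwk.symm) (hspan p hp.2 w hwS), hp.2⟩
      exact (measure_mono hsub).trans (hC w hwS)
  have hcard : F.card = (2 * m) ^ n := by
    rw [Fintype.card_piFinset_const, Int.card_Ico]
    congr 1
    omega
  calc σ (pcube n z (m * r) ∩ S)
      ≤ σ (⋃ k ∈ F, cellIndex n z r ⁻¹' {k} ∩ S) :=
        measure_mono fun p hp =>
          mem_iUnion₂.2 ⟨_, mapsTo_cellIndex_pcube n z hr m hp.1, rfl, hp.2⟩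
    _ ≤ ∑ k ∈ F, σ (cellIndex n z r ⁻¹' {k} ∩ S) := measure_biUnion_finset_le F _
    _ ≤ ∑ _k ∈ F, C := Finset.sum_le_sum fun k _ => hcell k
    _ = ((2 * m) ^ n : ℕ) * C := by rw [Finset.sum_const, nsmul_eq_mul, hcard]

theorem le_of_lower_le_upper {M r x : ℝ} (n : ℕ) (hM : 0 < M) (hr : 0 < r) (hx : 0 < x)
    (h : M⁻¹ * (x * r) ^ (n + 1) ≤ (2 * x) ^ n * (M * r ^ (n + 1))) :
    x ≤ M ^ 2 * 2 ^ n := by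
  have key : x ^ n * r ^ (n + 1) * x ≤ x ^ n * r ^ (n + 1) * (M ^ 2 * 2 ^ n) :=
    calc x ^ n * r ^ (n + 1) * x = M * (M⁻¹ * (x * r) ^ (n + 1)) := by field_simp; ring
      _ ≤ M * ((2 * x) ^ n * (M * r ^ (n + 1))) := by gcongr
      _ = x ^ n * r ^ (n + 1) * (M ^ 2 * 2 ^ n) := by ring
  exact le_of_mul_le_mul_left key (by positivity)

end ParabolicADR

open ParabolicADR

theorem statement_8_general (n : ℕ) (M₀ : ℝ) (hM₀ : 1 ≤ M₀)
    (S : Set (Pt n)) (σ : Measure (Pt n))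
    (hdiam : pdiam n S = ⊤)
    (hADR : ∀ z ∈ S, ∀ ρ : ℝ, 0 < ρ →
      ENNReal.ofReal (M₀⁻¹ * ρ ^ (n + 1)) ≤ σ (pcube n z ρ ∩ S) ∧
      σ (pcube n z ρ ∩ S) ≤ ENNReal.ofReal (M₀ * ρ ^ (n + 1))) :
    (⨆ p ∈ S, (p.2 : EReal)) - (⨅ p ∈ S, (p.2 : EReal)) = ⊤ := by
  by_contra hspan
  obtain ⟨z, hz⟩ : S.Nonempty := nonempty_iff_ne_empty.2 fun h => by simp [h, pdiam] at hdiam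
  obtain ⟨T, hT⟩ := exists_sub_le_of_iSup_sub_iInf_ne_top hspan
  set r := |T| + 1
  have hr : 0 < r := by positivity
  have hTr : T < r ^ 2 := by nlinarith [le_abs_self T, abs_nonneg T]
  have htime : ∀ p ∈ S, ∀ q ∈ S, |p.2 - q.2| < r ^ 2 := fun p hp q hq =>
    abs_sub_lt_iff.2 ⟨(hT p hp q hq).trans_lt hTr, (hT q hq p hp).trans_lt hTr⟩
  obtain ⟨m, hm⟩ := exists_nat_gt (M₀ ^ 2 * 2 ^ n)
  have hm0 : (0 : ℝ) < m := lt_of_lt_of_le' hm (by positivity)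
  have hupper := measure_pcube_inter_le hr htime (fun w hw => (hADR w hw r hr).2) z m
  have hlower := (hADR z hz (m * r) (by positivity)).1
  refine hm.not_ge (le_of_lower_le_upper n (by linarith) hr hm0 ?_)
  rw [← ENNReal.ofReal_le_ofReal_iff (by positivity)]
  refine hlower.trans (hupper.trans_eq ?_)
  rw [← ENNReal.ofReal_natCast, ← ENNReal.ofReal_mul (by positivity)]
  push_cast
  rfl

/-- for a closed parabolic ADR set of infinite diameter, the time-span is
infinite. -/
theorem statement_8 (n : ℕ) (hn : 1 ≤ n) (M₀ : ℝ) (hM₀ : 1 ≤ M₀)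
    (S : Set (Pt n)) (σ : Measure (Pt n))
    (hS : IsClosed S) (hsupp : σ Sᶜ = 0) (hdiam : pdiam n S = ⊤)
    (hADR : ∀ z ∈ S, ∀ ρ : ℝ, 0 < ρ →
      ENNReal.ofReal (M₀⁻¹ * ρ ^ (n + 1)) ≤ σ (pcube n z ρ ∩ S) ∧
      σ (pcube n z ρ ∩ S) ≤ ENNReal.ofReal (M₀ * ρ ^ (n + 1))) :
    (⨆ p ∈ S, (p.2 : EReal)) - (⨅ p ∈ S, (p.2 : EReal)) = ⊤ :=
  statement_8_general n M₀ hM₀ S σ hdiam hADR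
end
end

section
/- Let n ≥ 1, let Σ ⊂ ℝⁿ⁺¹ be a closed set, and let σ be a Borel measure on ℝⁿ⁺¹ supported in Σ satisfying the upper ADR bound σ(Q_ρ(z,τ) ∩ Σ) ≤ M₀ρⁿ⁺¹ for every (z,τ) ∈ Σ and every 0 < ρ ≤ 4r, where M₀ ≥ 1 and r > 0. Let (x₀,t₀) ∈ Σ. Then there is a constant C₁ depending only on n and M₀ such that for every Borel set E ⊂ Σ ∩ Q_{2r}(x₀,t₀) and every (X,t) ∈ ℝⁿ⁺¹, the single-layer heat potential satisfies 0 ≤ ∫_E Γ(X,t;y,s) dσ(y,s) ≤ C₁·r. -/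
open MeasureTheory Set Filter Topology

noncomputable section

/-!
The heat kernel is bounded by `exp (n ^ 2) / d ^ n`, where `d` is the parabolic distance between
its two arguments: with `u = |X - y| / √(t - s)` this is `e^{-u²/4} (1 + u)^n ≤ e^{n²}`, which
follows from `1 + u ≤ eᵘ` and `n u - u² / 4 ≤ n²`. Split `E` according to the parabolic distance
to the pole `(X,t)`: the part at distance `> r` has measure `≲ M₀ rⁿ⁺¹` and kernel `≲ r⁻ⁿ`;
the dyadic shell at distance `≈ s = r / 2ᵏ` lies in a cube of size `3 s` centred on `Σ`, so it
contributes `≲ M₀ s`. Summing the geometric series gives `≲ M₀ r`.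
-/

open Real

lemma exp_neg_sq_div_four_mul_one_add_pow_le (n : ℕ) {u : ℝ} (hu : 0 ≤ u) :
    exp (-u ^ 2 / 4) * (1 + u) ^ n ≤ exp (n ^ 2) := by
  calc exp (-u ^ 2 / 4) * (1 + u) ^ n ≤ exp (-u ^ 2 / 4) * exp u ^ n := by
        gcongr
        linarith [add_one_le_exp u]
    _ = exp (-u ^ 2 / 4 + n * u) := by rw [← exp_nat_mul, ← exp_add]
    _ ≤ exp (n ^ 2) := exp_le_exp.mpr (by nlinarith [sq_nonneg (u / 2 - n)])

section ParabolicDistance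

variable {n : ℕ}

lemma pdist_nonneg (p q : Pt n) : 0 ≤ pdist n p q := by
  unfold pdist pnorm
  positivity

lemma norm_fst_sub_le_pdist (p q : Pt n) : ‖p.1 - q.1‖ ≤ pdist n p q :=
  le_add_of_nonneg_right (sqrt_nonneg _)

lemma abs_snd_sub_le_sq_of_pdist_le {p q : Pt n} {s : ℝ} (h : pdist n p q ≤ s) :
    |p.2 - q.2| ≤ s ^ 2 := by
  have hsqrt : √|p.2 - q.2| ≤ s := (le_add_of_nonneg_left (norm_nonneg _)).trans h
  exact (sqrt_le_iff.mp hsqrt).2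

lemma pdist_pos_of_ne {p q : Pt n} (h : q ≠ p) : 0 < pdist n p q := by
  refine (pdist_nonneg p q).lt_of_ne' fun h0 => h ?_
  have hX : ‖p.1 - q.1‖ ≤ 0 := h0 ▸ norm_fst_sub_le_pdist p q
  have ht : |p.2 - q.2| ≤ 0 := by simpa using abs_snd_sub_le_sq_of_pdist_le h0.le
  exact Prod.ext (sub_eq_zero.mp (norm_le_zero_iff.mp hX)).symm
    (sub_eq_zero.mp (abs_nonpos_iff.mp ht)).symm

lemma mem_pcube_of_pdist_le {p q z : Pt n} {s : ℝ} (hs : 0 < s) (hq : pdist n p q ≤ s)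
    (hz : pdist n p z ≤ s) : q ∈ pcube n z (3 * s) := by
  have hX : ‖q.1 - z.1‖ ≤ 2 * s := by
    linarith [norm_sub_le_norm_sub_add_norm_sub q.1 p.1 z.1, norm_sub_rev q.1 p.1,
      norm_fst_sub_le_pdist p q, norm_fst_sub_le_pdist p z]
  have ht : |q.2 - z.2| ≤ 2 * s ^ 2 := by
    linarith [abs_sub_le q.2 p.2 z.2, abs_sub_comm q.2 p.2,
      abs_snd_sub_le_sq_of_pdist_le hq, abs_snd_sub_le_sq_of_pdist_le hz]
  obtain ⟨ht₁, ht₂⟩ := abs_le.mp ht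
  refine ⟨fun i => ?_, by nlinarith, by nlinarith⟩
  calc |q.1 i - z.1 i| ≤ ‖q.1 - z.1‖ := PiLp.norm_apply_le (q.1 - z.1) i
    _ < 3 * s := by linarith

end ParabolicDistance

lemma heatKernel_le_exp_div_pdist_pow (n : ℕ) (X Y : EuclideanSpace ℝ (Fin n)) (t s : ℝ) :
    heatKernel n X t Y s ≤ exp (n ^ 2) / pdist n (X, t) (Y, s) ^ n := by
  unfold heatKernel
  split_ifs with hst
  · have hτ : 0 < t - s := sub_pos.mpr hst
    obtain ⟨b, hb_eq⟩ : ∃ b, √(t - s) = b := ⟨_, rfl⟩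
    have hb : 0 < b := hb_eq ▸ sqrt_pos.mpr hτ
    set u := ‖X - Y‖ / b
    have hpdist : pdist n (X, t) (Y, s) = b * (1 + u) := by
      simp only [pdist, pnorm, abs_of_pos hτ, hb_eq, u]
      field_simp
      ring
    have hprefactor : (4 * π * (t - s)) ^ (-(n : ℝ) / 2) ≤ (b ^ n)⁻¹ := by
      calc (4 * π * (t - s)) ^ (-(n : ℝ) / 2) ≤ (t - s) ^ (-(n : ℝ) / 2) :=
            rpow_le_rpow_of_nonpos hτ (by nlinarith [pi_gt_three])
              (by rw [neg_div]; exact neg_nonpos.mpr (by positivity))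
        _ = (b ^ n)⁻¹ := by
          rw [← hb_eq, sqrt_eq_rpow, ← rpow_natCast, ← rpow_mul hτ.le, ← rpow_neg hτ.le]
          ring_nf
    have hgauss : -‖X - Y‖ ^ 2 / (4 * (t - s)) = -u ^ 2 / 4 := by
      rw [div_pow, ← hb_eq, sq_sqrt hτ.le]
      field_simp
    rw [hgauss, hpdist]
    calc (4 * π * (t - s)) ^ (-(n : ℝ) / 2) * exp (-u ^ 2 / 4)
        ≤ (b ^ n)⁻¹ * (exp (n ^ 2) / (1 + u) ^ n) := by
          gcongr
          rw [le_div_iff₀ (by positivity)]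
          exact exp_neg_sq_div_four_mul_one_add_pow_le n (by positivity)
      _ = exp (n ^ 2) / (b * (1 + u)) ^ n := by
          rw [mul_pow]
          field_simp
  · exact div_nonneg (exp_pos _).le (pow_nonneg (pdist_nonneg _ _) n)

lemma exists_div_two_pow_lt_le {x r : ℝ} (hx : 0 < x) (hxr : x ≤ r) :
    ∃ k : ℕ, r / 2 ^ (k + 1) < x ∧ x ≤ r / 2 ^ k := by
  obtain ⟨k, hk, hk'⟩ := exists_nat_pow_near ((one_le_div hx).mpr hxr) one_lt_two
  refine ⟨k, ?_, ?_⟩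
  · rwa [div_lt_iff₀ (by positivity), mul_comm, ← div_lt_iff₀ hx]
  · rwa [le_div_iff₀ (by positivity), mul_comm, ← le_div_iff₀ hx]

def UpperADR (n : ℕ) (S : Set (Pt n)) (σ : Measure (Pt n)) (M₀ R : ℝ) : Prop :=
  ∀ z ∈ S, ∀ ρ : ℝ, 0 < ρ → ρ ≤ R → σ (pcube n z ρ ∩ S) ≤ ENNReal.ofReal (M₀ * ρ ^ (n + 1))

section UpperADR

variable {n : ℕ} {S : Set (Pt n)} {σ : Measure (Pt n)} {M₀ R : ℝ}

lemma setLIntegral_heatKernel_le_of_subset_pcube (hADR : UpperADR n S σ M₀ R) (p : Pt n)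
    {z : Pt n} (hz : z ∈ S) {ρ δ : ℝ} (hρ : 0 < ρ) (hρR : ρ ≤ R) (hδ : 0 < δ)
    {A : Set (Pt n)} (hA : A ⊆ pcube n z ρ ∩ S) (hAδ : ∀ q ∈ A, δ ≤ pdist n p q) :
    ∫⁻ q in A, ENNReal.ofReal (heatKernel n p.1 p.2 q.1 q.2) ∂σ ≤
      ENNReal.ofReal (exp (n ^ 2) / δ ^ n * (M₀ * ρ ^ (n + 1))) := by
  calc ∫⁻ q in A, ENNReal.ofReal (heatKernel n p.1 p.2 q.1 q.2) ∂σ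
      ≤ ∫⁻ _ in A, ENNReal.ofReal (exp (n ^ 2) / δ ^ n) ∂σ := by
        refine setLIntegral_mono measurable_const fun q hq => ENNReal.ofReal_le_ofReal ?_
        calc heatKernel n p.1 p.2 q.1 q.2 ≤ exp (n ^ 2) / pdist n p q ^ n :=
              heatKernel_le_exp_div_pdist_pow n p.1 q.1 p.2 q.2
          _ ≤ exp (n ^ 2) / δ ^ n := by gcongr; exact hAδ q hq
    _ = ENNReal.ofReal (exp (n ^ 2) / δ ^ n) * σ A := setLIntegral_const _ _
    _ ≤ ENNReal.ofReal (exp (n ^ 2) / δ ^ n) * ENNReal.ofReal (M₀ * ρ ^ (n + 1)) := by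
        gcongr
        exact (measure_mono hA).trans (hADR z hz ρ hρ hρR)
    _ = ENNReal.ofReal (exp (n ^ 2) / δ ^ n * (M₀ * ρ ^ (n + 1))) :=
        (ENNReal.ofReal_mul (by positivity)).symm

lemma setLIntegral_heatKernel_shell_le (hADR : UpperADR n S σ M₀ R) (p : Pt n) {s : ℝ}
    (hs : 0 < s) (hsR : 3 * s ≤ R) {A : Set (Pt n)} (hAS : A ⊆ S)
    (hA : ∀ q ∈ A, s / 2 < pdist n p q ∧ pdist n p q ≤ s) :
    ∫⁻ q in A, ENNReal.ofReal (heatKernel n p.1 p.2 q.1 q.2) ∂σ ≤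
      ENNReal.ofReal (exp (n ^ 2) * 2 ^ n * 3 ^ (n + 1) * M₀ * s) := by
  obtain rfl | ⟨z, hz⟩ := A.eq_empty_or_nonempty
  · simp
  have hsub : A ⊆ pcube n z (3 * s) ∩ S := fun q hq =>
    ⟨mem_pcube_of_pdist_le hs (hA q hq).2 (hA z hz).2, hAS hq⟩
  convert setLIntegral_heatKernel_le_of_subset_pcube hADR p (hAS hz) (by positivity) hsR
    (half_pos hs) hsub fun q hq => (hA q hq).1.le using 2
  rw [div_pow]
  field_simp
  ring

theorem setLIntegral_heatKernel_le (hM₀ : 0 ≤ M₀) {r : ℝ} (hr : 0 < r) {x₀ : Pt n}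
    (hx₀ : x₀ ∈ S) (hADR : UpperADR n S σ M₀ (4 * r)) {E : Set (Pt n)}
    (hE : E ⊆ S ∩ pcube n x₀ (2 * r)) (p : Pt n) :
    ∫⁻ q in E, ENNReal.ofReal (heatKernel n p.1 p.2 q.1 q.2) ∂σ ≤
      ENNReal.ofReal (exp (n ^ 2) * 2 ^ (n + 1) * (1 + 3 ^ (n + 1)) * M₀ * r) := by
  set g := fun q : Pt n => ENNReal.ofReal (heatKernel n p.1 p.2 q.1 q.2)
  set far := {q ∈ E | r < pdist n p q}
  set shell := fun k : ℕ => {q ∈ E | r / 2 ^ (k + 1) < pdist n p q ∧ pdist n p q ≤ r / 2 ^ k}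
  set c := exp (n ^ 2) * 2 ^ n * 3 ^ (n + 1) * M₀ * r
  have hcover : E ⊆ {p} ∪ far ∪ ⋃ k, shell k := by
    intro q hq
    rcases eq_or_ne q p with rfl | hqp
    · exact Or.inl (Or.inl rfl)
    rcases lt_or_ge r (pdist n p q) with hfar | hnear
    · exact Or.inl (Or.inr ⟨hq, hfar⟩)
    · obtain ⟨k, hk⟩ := exists_div_two_pow_lt_le (pdist_pos_of_ne hqp) hnear
      exact Or.inr (mem_iUnion.mpr ⟨k, hq, hk⟩)
  have hpole : ∫⁻ q in {p}, g q ∂σ = 0 := by simp [g, heatKernel]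
  have hfar : ∫⁻ q in far, g q ∂σ ≤ ENNReal.ofReal (exp (n ^ 2) * 2 ^ (n + 1) * M₀ * r) := by
    convert setLIntegral_heatKernel_le_of_subset_pcube (A := far) hADR p hx₀ (by positivity) (by linarith)
      hr (fun q hq => ⟨(hE hq.1).2, (hE hq.1).1⟩) fun q hq => hq.2.le using 2
    field_simp
    ring
  have hshell : ∀ k, ∫⁻ q in shell k, g q ∂σ ≤ ENNReal.ofReal (c * (1 / 2) ^ k) := by
    intro k
    have h2k : (1 : ℝ) ≤ 2 ^ k := one_le_pow₀ one_le_two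
    convert setLIntegral_heatKernel_shell_le (A := shell k) hADR p (s := r / 2 ^ k) (by positivity)
      (by rw [mul_div_assoc']; exact (div_le_iff₀ (by positivity)).mpr (by nlinarith))
      (fun q hq => (hE hq.1).1) (fun q hq => by rw [div_div, ← pow_succ]; exact hq.2) using 2
    simp only [c, one_div_pow]
    field_simp
  calc ∫⁻ q in E, g q ∂σ ≤ ∫⁻ q in {p} ∪ far ∪ ⋃ k, shell k, g q ∂σ := lintegral_mono_set hcover
    _ ≤ ∫⁻ q in {p}, g q ∂σ + ∫⁻ q in far, g q ∂σ + ∑' k, ∫⁻ q in shell k, g q ∂σ := by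
        grw [lintegral_union_le, lintegral_union_le, lintegral_iUnion_le]
    _ ≤ 0 + ENNReal.ofReal (exp (n ^ 2) * 2 ^ (n + 1) * M₀ * r) +
          ∑' k, ENNReal.ofReal (c * (1 / 2) ^ k) := by
        rw [hpole]
        gcongr with k
        exact hshell k
    _ = ENNReal.ofReal (exp (n ^ 2) * 2 ^ (n + 1) * (1 + 3 ^ (n + 1)) * M₀ * r) := by
        rw [zero_add, ← ENNReal.ofReal_tsum_of_nonneg (fun k => by positivity)
          (summable_geometric_two.mul_left c), tsum_mul_left, tsum_geometric_two,
          ← ENNReal.ofReal_add (by positivity) (by positivity)]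
        congr 1
        ring

end UpperADR

theorem statement_11_general (n : ℕ) (M₀ : ℝ) (hM₀ : 1 ≤ M₀) :
    ∃ C₁ : ℝ, 0 < C₁ ∧
      ∀ (S : Set (Pt n)) (σ : Measure (Pt n)) (r : ℝ) (x₀ : Pt n), 0 < r →
        IsClosed S → σ Sᶜ = 0 → x₀ ∈ S →
        (∀ z ∈ S, ∀ ρ : ℝ, 0 < ρ → ρ ≤ 4 * r →
          σ (pcube n z ρ ∩ S) ≤ ENNReal.ofReal (M₀ * ρ ^ (n + 1))) →
        ∀ E : Set (Pt n), MeasurableSet E → E ⊆ S ∩ pcube n x₀ (2 * r) →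
          ∀ p : Pt n,
            ∫⁻ q in E, ENNReal.ofReal (heatKernel n p.1 p.2 q.1 q.2) ∂σ ≤
              ENNReal.ofReal (C₁ * r) := by
  refine ⟨exp (n ^ 2) * 2 ^ (n + 1) * (1 + 3 ^ (n + 1)) * M₀, by positivity, ?_⟩
  intro S σ r x₀ hr _ _ hx₀ hADR E _ hE p
  exact setLIntegral_heatKernel_le (by linarith) hr hx₀ hADR hE p

/-- property (2) of Claim A.3: the single layer heat potential of a surface
cube is bounded by `C₁ r`, assuming upper ADR. -/
theorem statement_11 (n : ℕ) (hn : 1 ≤ n) (M₀ : ℝ) (hM₀ : 1 ≤ M₀) :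
    ∃ C₁ : ℝ, 0 < C₁ ∧
      ∀ (S : Set (Pt n)) (σ : Measure (Pt n)) (r : ℝ) (x₀ : Pt n), 0 < r →
        IsClosed S → σ Sᶜ = 0 → x₀ ∈ S →
        (∀ z ∈ S, ∀ ρ : ℝ, 0 < ρ → ρ ≤ 4 * r →
          σ (pcube n z ρ ∩ S) ≤ ENNReal.ofReal (M₀ * ρ ^ (n + 1))) →
        ∀ E : Set (Pt n), MeasurableSet E → E ⊆ S ∩ pcube n x₀ (2 * r) →
          ∀ p : Pt n,
            ∫⁻ q in E, ENNReal.ofReal (heatKernel n p.1 p.2 q.1 q.2) ∂σ ≤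
              ENNReal.ofReal (C₁ * r) :=
  statement_11_general n M₀ hM₀
end
end

section
/- Let n ≥ 1, let Σ ⊂ ℝⁿ⁺¹ be a closed set, and let σ be a Borel measure on ℝⁿ⁺¹ supported in Σ. Let (x₀,t₀) ∈ ℝⁿ⁺¹, r > 0, a ∈ (0,1/2), b > 0, and set Δ̂ = Σ ∩ Q_r⁻(x₀, t₀ − (ar)²). Assume σ(Δ̂) ≥ b·rⁿ⁺¹. Then there exists c₂ > 0, depending only on n, a and b, such that ∫_{Δ̂} Γ(X,t;y,s) dσ(y,s) ≥ c₂·r for every (X,t) ∈ Q_{ar/2}(x₀,t₀). -/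
open MeasureTheory Set Filter Topology

noncomputable section

lemma measurableSet_pcubeMinus (n : ℕ) (c : Pt n) (r : ℝ) :
    MeasurableSet (pcubeMinus n c r) := by
  have h : pcubeMinus n c r =
      (⋂ i, {p : Pt n | |p.1 i - c.1 i| < r}) ∩
        ({p : Pt n | c.2 - r ^ 2 < p.2} ∩ {p : Pt n | p.2 < c.2}) := by
    ext p; simp [pcubeMinus]
  rw [h]
  refine MeasurableSet.inter (MeasurableSet.iInter fun i => ?_)
    (MeasurableSet.inter ?_ ?_)
  · exact measurableSet_lt (by fun_prop) measurable_const
  · exact measurableSet_lt measurable_const (by fun_prop)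
  · exact measurableSet_lt (by fun_prop) measurable_const

set_option maxHeartbeats 1000000 in
/-- property (3) of Claim A.3: lower bound `u ≥ c₂ r` on `Q_{ar/2}(x₀,t₀)`
for the single layer potential of `Δ̂ = Σ ∩ Q_r⁻(x₀, t₀ − (ar)²)`. -/
theorem statement_12 (n : ℕ) (hn : 1 ≤ n) (a b : ℝ)
    (ha : a ∈ Set.Ioo (0 : ℝ) (1 / 2)) (hb : 0 < b) :
    ∃ c₂ : ℝ, 0 < c₂ ∧
      ∀ (S : Set (Pt n)) (σ : Measure (Pt n)) (x₀ : Pt n) (r : ℝ), 0 < r →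
        IsClosed S → σ Sᶜ = 0 →
        ENNReal.ofReal (b * r ^ (n + 1)) ≤
          σ (S ∩ pcubeMinus n (x₀.1, x₀.2 - (a * r) ^ 2) r) →
        ∀ p ∈ pcube n x₀ (a * r / 2),
          ENNReal.ofReal (c₂ * r) ≤
            ∫⁻ q in S ∩ pcubeMinus n (x₀.1, x₀.2 - (a * r) ^ 2) r,
              ENNReal.ofReal (heatKernel n p.1 p.2 q.1 q.2) ∂σ := by
  obtain ⟨ha0, ha2⟩ := ha
  set M : ℝ := (8 * Real.pi) ^ (-(n : ℝ) / 2) * Real.exp (-(4 * n) / (3 * a ^ 2)) with hM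
  have hMpos : 0 < M :=
    mul_pos (Real.rpow_pos_of_pos (by positivity) _) (Real.exp_pos _)
  refine ⟨b * M, by positivity, ?_⟩
  intro S σ x₀ r hr hS _hσ hmeas p hp
  set A := S ∩ pcubeMinus n (x₀.1, x₀.2 - (a * r) ^ 2) r with hA
  obtain ⟨hp1, hp2, hp3⟩ := hp
  have hAm : MeasurableSet A := hS.measurableSet.inter (measurableSet_pcubeMinus n _ r)
  have key : ∀ q ∈ A, ENNReal.ofReal (M / r ^ n) ≤
      ENNReal.ofReal (heatKernel n p.1 p.2 q.1 q.2) := by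
    rintro q ⟨-, hq1, hq2, hq3⟩
    simp only at hq1 hq2 hq3
    have ha2' : a ^ 2 < 1 / 4 := by nlinarith
    have hts1 : 3 / 4 * (a * r) ^ 2 < p.2 - q.2 := by nlinarith
    have hts2 : p.2 - q.2 < 2 * r ^ 2 := by nlinarith
    have hst : q.2 < p.2 := by nlinarith
    have htpos : 0 < p.2 - q.2 := by linarith
    have hnorm : ‖p.1 - q.1‖ ^ 2 ≤ 4 * n * r ^ 2 := by
      have hne : ‖p.1 - q.1‖ ^ 2 = ∑ i, (p.1 i - q.1 i) ^ 2 := by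
        rw [EuclideanSpace.norm_eq, Real.sq_sqrt (by positivity)]
        simp [sq_abs]
      rw [hne]
      calc ∑ i, (p.1 i - q.1 i) ^ 2 ≤ ∑ _i : Fin n, (2 * r) ^ 2 := by
            refine Finset.sum_le_sum fun i _ => ?_
            have h1 := hp1 i
            have h2 := hq1 i
            have := abs_sub_abs_le_abs_sub (p.1 i - q.1 i) (p.1 i - x₀.1 i)
            have habs : |p.1 i - q.1 i| ≤ |p.1 i - x₀.1 i| + |x₀.1 i - q.1 i| := by
              calc |p.1 i - q.1 i| = |(p.1 i - x₀.1 i) + (x₀.1 i - q.1 i)| := by ring_nf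
                _ ≤ _ := abs_add_le _ _
            have : |p.1 i - q.1 i| ≤ 2 * r := by
              have : |x₀.1 i - q.1 i| = |q.1 i - x₀.1 i| := abs_sub_comm _ _
              nlinarith
            nlinarith [abs_nonneg (p.1 i - q.1 i), sq_abs (p.1 i - q.1 i)]
        _ = 4 * n * r ^ 2 := by simp [Finset.card_fin]; ring
    apply ENNReal.ofReal_le_ofReal
    rw [heatKernel, if_pos hst]
    have hMr : M / r ^ n =
        (8 * Real.pi * r ^ 2) ^ (-(n : ℝ) / 2) * Real.exp (-(4 * n) / (3 * a ^ 2)) := by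
      rw [Real.mul_rpow (by positivity) (by positivity)]
      have : ((r : ℝ) ^ 2) ^ (-(n : ℝ) / 2) = (r ^ n)⁻¹ := by
        rw [← Real.rpow_natCast r 2, ← Real.rpow_mul hr.le]
        rw [show ((2 : ℕ) : ℝ) * (-(n : ℝ) / 2) = -(n : ℝ) by ring]
        rw [Real.rpow_neg hr.le, Real.rpow_natCast]
      rw [this]; ring
    rw [hMr]
    have h1 : (8 * Real.pi * r ^ 2) ^ (-(n : ℝ) / 2) ≤
        (4 * Real.pi * (p.2 - q.2)) ^ (-(n : ℝ) / 2) := by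
      apply Real.rpow_le_rpow_of_nonpos (by positivity)
      · nlinarith [Real.pi_pos]
      · have : (0 : ℝ) ≤ (n : ℝ) := Nat.cast_nonneg n
        linarith
    have h2 : Real.exp (-(4 * n) / (3 * a ^ 2)) ≤
        Real.exp (-‖p.1 - q.1‖ ^ 2 / (4 * (p.2 - q.2))) := by
      apply Real.exp_le_exp.mpr
      rw [div_le_div_iff₀ (by positivity) (by positivity)]
      have hn' : (1 : ℝ) ≤ (n : ℝ) := by exact_mod_cast hn
      nlinarith [mul_le_mul_of_nonneg_left hnorm (by positivity : (0:ℝ) ≤ 3 * a ^ 2),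
        mul_le_mul_of_nonneg_left hts1.le (by positivity : (0:ℝ) ≤ 16 * (n : ℝ))]
    exact mul_le_mul h1 h2 (Real.exp_pos _).le (Real.rpow_nonneg (by positivity) _)
  calc ENNReal.ofReal (b * M * r)
      = ENNReal.ofReal (M / r ^ n) * ENNReal.ofReal (b * r ^ (n + 1)) := by
        rw [← ENNReal.ofReal_mul (by positivity)]
        congr 1
        field_simp
        ring
    _ ≤ ENNReal.ofReal (M / r ^ n) * σ A := by exact mul_le_mul_right hmeas _
    _ = ∫⁻ _ in A, ENNReal.ofReal (M / r ^ n) ∂σ := by rw [setLIntegral_const]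
    _ ≤ ∫⁻ q in A, ENNReal.ofReal (heatKernel n p.1 p.2 q.1 q.2) ∂σ :=
        setLIntegral_mono' hAm key
end
end
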